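/- Let A, B ∈ ℝ^{N×N} with |A| ≤ B entrywise, assume B is irreducible, let u ∈ ℝ^N be a nonzero vector with Au = u, and assume B|u| = |u|. If in addition B is primitive (i.e., ρ(B) is the only eigenvalue of B with modulus ρ(B)), then 1 is the only complex eigenvalue of A with modulus 1. -/

import Mathlib

open Filter

/-- A matrix is irreducible if the directed graph on `Fin N` with an edge from `k` to `j`
whenever `M j k ≠ 0` is strongly connected. -/
def MatIrred {N : ℕ} (M : Matrix (Fin N) (Fin N) ℝ) : Prop :=
  ∀ a b : Fin N, Relation.TransGen (fun k j => M j k ≠ 0) a b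

/-- The spectral radius of a real matrix: the maximum of the absolute values of its
complex eigenvalues. -/
noncomputable def specRad {N : ℕ} (M : Matrix (Fin N) (Fin N) ℝ) : ℝ :=
  sSup ((fun z : ℂ => ‖z‖) '' spectrum ℂ (M.map Complex.ofReal))

/-!
For an eigenvector `A v = μ v` with `‖μ‖ = 1`, the moduli `a = ‖v‖` satisfy `a ≤ B a`. As `B` is
irreducible with the positive fixed vector `|u|`, this forces `B a = a` and `a > 0`. Equality in
the triangle inequality for `(A v)_i` then determines `A` entrywise,
`conj (μ v_i) A_ij v_j = a_i B_ij a_j`, i.e. `B = conj μ • D⁻¹ A D` with `D = diag (v / a)`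
unitary. Hence `D⁻¹ u` is an eigenvector of `B` for `conj μ`, which lies on the circle
`‖λ‖ = ρ(B) = 1`, and primitivity gives `conj μ = 1`.
-/

open Matrix Finset
open scoped ComplexOrder

theorem Matrix.mem_spectrum_iff_exists_mulVec_eq_smul {n K : Type*} [Fintype n] [DecidableEq n]
    [Field K] (M : Matrix n n K) (μ : K) :
    μ ∈ spectrum K M ↔ ∃ v ≠ 0, M *ᵥ v = μ • v := by
  rw [← Matrix.spectrum_toLin', ← Module.End.hasEigenvalue_iff_mem_spectrum,
    Module.End.hasEigenvalue_iff, Submodule.ne_bot_iff]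
  simp only [Module.End.mem_eigenspace_iff, Matrix.toLin'_apply]
  tauto

theorem Complex.eq_ofReal_of_norm_le_of_sum_eq {ι : Type*} {s : Finset ι} {z : ι → ℂ}
    {r : ι → ℝ} (hz : ∀ i ∈ s, ‖z i‖ ≤ r i) (hsum : ∑ i ∈ s, z i = ∑ i ∈ s, (r i : ℂ)) :
    ∀ i ∈ s, z i = r i := by
  have hre : ∀ i ∈ s, (z i).re = r i := by
    refine (sum_eq_sum_iff_of_le fun i hi => (re_le_norm _).trans (hz i hi)).1 ?_
    simpa [Complex.re_sum] using congrArg re hsum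
  intro i hi
  have hnonneg : 0 ≤ z i :=
    re_eq_norm.1 (le_antisymm (re_le_norm _) ((hz i hi).trans (hre i hi).ge))
  rw [← hre i hi]
  exact Complex.ext rfl (Complex.nonneg_iff.1 hnonneg).2.symm

section

variable {n : Type*} [Fintype n] {A B : Matrix n n ℝ}

theorem mulVec_mono_of_nonneg (hB0 : ∀ i j, 0 ≤ B i j) {w z : n → ℝ} (h : w ≤ z) :
    B *ᵥ w ≤ B *ᵥ z := fun i =>
  sum_le_sum fun j _ => mul_le_mul_of_nonneg_left (h j) (hB0 i j)

theorem norm_eigenvalue_mul_norm_le_mulVec (hAB : ∀ i j, |A i j| ≤ B i j) {μ : ℂ} {v : n → ℂ}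
    (hv : A.map Complex.ofReal *ᵥ v = μ • v) (i : n) :
    ‖μ‖ * ‖v i‖ ≤ (B *ᵥ (‖v ·‖)) i :=
  calc ‖μ‖ * ‖v i‖ = ‖∑ j, (A i j : ℂ) * v j‖ := by
        rw [← norm_mul, ← smul_eq_mul, ← Pi.smul_apply, ← hv]; rfl
    _ ≤ ∑ j, ‖(A i j : ℂ) * v j‖ := norm_sum_le _ _
    _ ≤ ∑ j, B i j * ‖v j‖ := sum_le_sum fun j _ => by
        rw [norm_mul, Complex.norm_real, Real.norm_eq_abs]
        exact mul_le_mul_of_nonneg_right (hAB i j) (norm_nonneg _)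

theorem exists_le_smul_eq_apply [Nonempty n] {p : n → ℝ} (hp : ∀ i, 0 < p i) (w : n → ℝ) :
    ∃ (c : ℝ) (i : n), w ≤ c • p ∧ w i = c * p i := by
  obtain ⟨i, -, hi⟩ := exists_max_image univ (fun i => w i / p i) univ_nonempty
  refine ⟨w i / p i, i, fun j => ?_, (div_mul_cancel₀ _ (hp i).ne').symm⟩
  simpa [← div_le_iff₀ (hp j)] using hi j (mem_univ j)

theorem norm_le_of_mem_spectrum_of_mulVec_eq_smul [DecidableEq n] (hB0 : ∀ i j, 0 ≤ B i j)
    {p : n → ℝ} (hp : ∀ i, 0 < p i) {r : ℝ} (hBp : B *ᵥ p = r • p) {l : ℂ}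
    (hl : l ∈ spectrum ℂ (B.map Complex.ofReal)) : ‖l‖ ≤ r := by
  obtain ⟨x, hx0, hx⟩ := (mem_spectrum_iff_exists_mulVec_eq_smul _ _).1 hl
  obtain ⟨j, hj⟩ := Function.ne_iff.1 hx0
  have : Nonempty n := ⟨j⟩
  obtain ⟨c, i, hxc, hxi⟩ := exists_le_smul_eq_apply hp (‖x ·‖)
  have hc : 0 < c := pos_of_mul_pos_left ((norm_pos_iff.2 hj).trans_le (hxc j)) (hp j).le
  have hxi_pos : 0 < ‖x i‖ := hxi ▸ mul_pos hc (hp i)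
  refine le_of_mul_le_mul_right ?_ hxi_pos
  calc ‖l‖ * ‖x i‖ ≤ (B *ᵥ (‖x ·‖)) i :=
        norm_eigenvalue_mul_norm_le_mulVec (fun i j => (abs_of_nonneg (hB0 i j)).le) hx i
    _ ≤ (B *ᵥ (c • p)) i := mulVec_mono_of_nonneg hB0 hxc i
    _ = r * ‖x i‖ := by
        rw [mulVec_smul, hBp, hxi]
        simp only [Pi.smul_apply, smul_eq_mul]
        ring

theorem star_mul_mul_eq_of_mulVec_norm_eq (hAB : ∀ i j, |A i j| ≤ B i j) {μ : ℂ} (hμ : ‖μ‖ = 1)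
    {v : n → ℂ} (hv : A.map Complex.ofReal *ᵥ v = μ • v) (hBv : B *ᵥ (‖v ·‖) = (‖v ·‖))
    (i j : n) : star (μ * v i) * (A i j * v j) = ‖v i‖ * B i j * ‖v j‖ := by
  refine Complex.eq_ofReal_of_norm_le_of_sum_eq (s := univ)
    (z := fun j => star (μ * v i) * (A i j * v j)) (r := fun j => ‖v i‖ * B i j * ‖v j‖)
    (fun j _ => ?_) ?_ j (mem_univ j) |>.trans (by push_cast; ring)
  · rw [norm_mul, norm_star, norm_mul, hμ, one_mul, norm_mul, Complex.norm_real,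
      Real.norm_eq_abs, mul_assoc]
    exact mul_le_mul_of_nonneg_left
      (mul_le_mul_of_nonneg_right (hAB i j) (norm_nonneg _)) (norm_nonneg _)
  · have hAv : ∑ j, (A i j : ℂ) * v j = μ * v i := congrFun hv i
    have hBv' : ∑ j, B i j * ‖v j‖ = ‖v i‖ := congrFun hBv i
    calc ∑ j, star (μ * v i) * (A i j * v j) = star (μ * v i) * (μ * v i) := by
          rw [← mul_sum, hAv]
      _ = ((‖v i‖ * ‖v i‖ : ℝ) : ℂ) := by
          rw [Complex.star_def, Complex.conj_mul', norm_mul, hμ, one_mul]; push_cast; ring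
      _ = ∑ j, ((‖v i‖ * B i j * ‖v j‖ : ℝ) : ℂ) := by
          rw [← Complex.ofReal_sum]; simp_rw [mul_assoc, ← mul_sum, hBv']

theorem mulVec_eq_star_smul_of_star_mul_mul_eq {μ : ℂ} {v : n → ℂ}
    (hrel : ∀ i j, star (μ * v i) * (A i j * v j) = ‖v i‖ * B i j * ‖v j‖)
    (hv0 : ∀ i, v i ≠ 0) {u : n → ℝ} (hAu : A *ᵥ u = u) :
    B.map Complex.ofReal *ᵥ (fun j => u j * ‖v j‖ / v j) =
      star μ • fun j => u j * ‖v j‖ / v j := by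
  ext i
  have hvi : (‖v i‖ : ℂ) ≠ 0 := by simpa using hv0 i
  have hAu_i : ∑ j, (A i j : ℂ) * u j = u i := by exact_mod_cast congrFun hAu i
  apply mul_left_cancel₀ hvi
  calc (‖v i‖ : ℂ) * ∑ j, (B i j : ℂ) * (u j * ‖v j‖ / v j)
      = ∑ j, (‖v i‖ * B i j * ‖v j‖) * (u j / v j) := by
        rw [mul_sum]; exact sum_congr rfl fun j _ => by ring
    _ = ∑ j, star (μ * v i) * (A i j * u j) := sum_congr rfl fun j _ => by
        rw [← hrel]; field_simp [hv0 j]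
    _ = star (μ * v i) * u i := by rw [← mul_sum, hAu_i]
    _ = ‖v i‖ * (star μ * (u i * ‖v i‖ / v i)) := by
        have hconj : star (v i) = ‖v i‖ ^ 2 / v i := by
          rw [Complex.star_def, ← Complex.conj_mul', mul_div_cancel_right₀ _ (hv0 i)]
        rw [star_mul', hconj]
        field_simp

end

section

variable {N : ℕ} {B : Matrix (Fin N) (Fin N) ℝ}

theorem specRad_eq_of_mulVec_eq_smul [Nonempty (Fin N)] (hB0 : ∀ i j, 0 ≤ B i j)
    {p : Fin N → ℝ} (hp : ∀ i, 0 < p i) {r : ℝ} (hBp : B *ᵥ p = r • p) : specRad B = r := by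
  have hr : (r : ℂ) ∈ spectrum ℂ (B.map Complex.ofReal) := by
    refine (mem_spectrum_iff_exists_mulVec_eq_smul _ _).2 ⟨(p ·), ?_, funext fun i => ?_⟩
    · obtain ⟨i⟩ := ‹Nonempty (Fin N)›
      exact Function.ne_iff.2 ⟨i, by simpa using (hp i).ne'⟩
    · exact (Complex.ofRealHom.map_mulVec B p i).symm.trans (by simp [hBp])
  have hbound : ∀ l ∈ spectrum ℂ (B.map Complex.ofReal), ‖l‖ ≤ r := fun l hl =>
    norm_le_of_mem_spectrum_of_mulVec_eq_smul hB0 hp hBp hl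
  have hr_norm : ‖(r : ℂ)‖ = r := le_antisymm (hbound _ hr) (by simpa using le_abs_self r)
  refine le_antisymm (csSup_le ⟨_, _, hr, rfl⟩ ?_) (le_csSup ⟨r, ?_⟩ ⟨_, hr, hr_norm⟩) <;>
    exact Set.forall_mem_image.2 hbound

theorem MatIrred.pos_of_mulVec_le (hB : MatIrred B) (hB0 : ∀ i j, 0 ≤ B i j) {w : Fin N → ℝ}
    (hw0 : 0 ≤ w) (hBw : B *ᵥ w ≤ w) (hw : w ≠ 0) (i : Fin N) : 0 < w i := by
  have step : ∀ {k j}, B j k ≠ 0 → 0 < w k → 0 < w j := fun {k j} hjk hk =>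
    calc 0 < B j k * w k := mul_pos ((hB0 j k).lt_of_ne' hjk) hk
      _ ≤ (B *ᵥ w) j := single_le_sum (f := fun l => B j l * w l)
          (fun l _ => mul_nonneg (hB0 j l) (hw0 l)) (mem_univ k)
      _ ≤ w j := hBw j
  obtain ⟨a, ha⟩ := Function.ne_iff.1 hw
  induction hB a i with
  | single h => exact step h ((hw0 a).lt_of_ne' ha)
  | tail _ h ih => exact step h ih

theorem MatIrred.mulVec_eq_of_le_mulVec (hB : MatIrred B) (hB0 : ∀ i j, 0 ≤ B i j)
    {p : Fin N → ℝ} (hp : ∀ i, 0 < p i) (hBp : B *ᵥ p = p) {w : Fin N → ℝ}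
    (hw : w ≤ B *ᵥ w) : B *ᵥ w = w := by
  cases isEmpty_or_nonempty (Fin N)
  · exact Subsingleton.elim _ _
  obtain ⟨c, i, hwc, hwi⟩ := exists_le_smul_eq_apply hp w
  -- The gap `c • p - w` is nonnegative, `B`-superharmonic and vanishes at `i`.
  suffices c • p - w = 0 by rw [← sub_eq_zero.1 this, mulVec_smul, hBp]
  by_contra hne
  have hBz : B *ᵥ (c • p - w) ≤ c • p - w := by
    rw [mulVec_sub, mulVec_smul, hBp]; exact sub_le_sub_left hw _
  have := hB.pos_of_mulVec_le hB0 (sub_nonneg.2 hwc) hBz hne i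
  simp [hwi] at this

end

/-- **Domination of matrices (primitive case).** Let `|A| ≤ B` entrywise, `B` irreducible,
`u ≠ 0` with `Au = u`, and `B|u| = |u|`. If in addition `B` is primitive, i.e. `ρ(B)` is
the only complex eigenvalue of `B` of modulus `ρ(B)`, then `1` is the only complex
eigenvalue of `A` of modulus `1`. -/
theorem domination_primitive_peripheral_spectrum
    {N : ℕ} (A B : Matrix (Fin N) (Fin N) ℝ)
    (hAB : ∀ j k, |A j k| ≤ B j k) (hB : MatIrred B)
    (u : Fin N → ℝ) (hu : u ≠ 0) (hAu : A.mulVec u = u)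
    (hBu : B.mulVec (fun i => |u i|) = (fun i => |u i|))
    (hprim : ∀ μ ∈ spectrum ℂ (B.map Complex.ofReal),
      ‖μ‖ = specRad B → μ = (specRad B : ℂ)) :
    ∀ μ ∈ spectrum ℂ (A.map Complex.ofReal), ‖μ‖ = 1 → μ = 1 := by
  intro μ hμ hμ1
  obtain ⟨j, hj⟩ := Function.ne_iff.1 hu
  have : Nonempty (Fin N) := ⟨j⟩
  have hB0 : ∀ i j, 0 ≤ B i j := fun i j => (abs_nonneg _).trans (hAB i j)
  have hu_pos : ∀ i, 0 < |u i| := hB.pos_of_mulVec_le hB0 (fun i => abs_nonneg _) hBu.le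
    fun h => hu (funext fun i => abs_eq_zero.1 (congrFun h i))
  obtain ⟨v, hv0, hv⟩ := (mem_spectrum_iff_exists_mulVec_eq_smul _ _).1 hμ
  have hBv : B *ᵥ (‖v ·‖) = (‖v ·‖) := hB.mulVec_eq_of_le_mulVec hB0 hu_pos hBu fun i => by
    simpa [hμ1] using norm_eigenvalue_mul_norm_le_mulVec hAB hv i
  have hv_pos : ∀ i, 0 < ‖v i‖ := hB.pos_of_mulVec_le hB0 (fun i => norm_nonneg _) hBv.le
    fun h => hv0 (funext fun i => norm_eq_zero.1 (congrFun h i))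
  have hstar : star μ ∈ spectrum ℂ (B.map Complex.ofReal) := by
    refine (mem_spectrum_iff_exists_mulVec_eq_smul _ _).2 ⟨_, ?_,
      mulVec_eq_star_smul_of_star_mul_mul_eq (star_mul_mul_eq_of_mulVec_norm_eq hAB hμ1 hv hBv)
        (fun i => norm_pos_iff.1 (hv_pos i)) hAu⟩
    exact Function.ne_iff.2 ⟨j, by simpa using ⟨hj, norm_ne_zero_iff.1 (hv_pos j).ne'⟩⟩
  have hrad : specRad B = 1 := specRad_eq_of_mulVec_eq_smul hB0 hu_pos (by rw [hBu, one_smul])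
  have h := hprim _ hstar (by rw [norm_star, hμ1, hrad])
  rw [hrad] at h
  simpa using congrArg star h
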